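/- arXiv:2211.05004 — 2 statements merged into one kernel-verified Lean document; each statement's English description precedes it below -/
import Mathlib

section
/- Let C₀ ⊆ C and D₀ ⊆ D be full subcategories with a functor f : C → D restricting to g : C₀ → D₀, where: (a) C₀ → C, D₀ → D are fully faithful; (b) the square is a pullback; (c) whenever there is a morphism d → j(d₀) with d₀ ∈ D₀, then d ∈ D₀. Then for each d₀ ∈ D₀, the comma category C₀ ×_{D₀} (D₀)_{/d₀} maps by an equivalence to C ×_D D_{/d₀}. -/
/-!
Both `CostructuredArrow.post` along the fully faithful inclusion `D₀ ⥤ D` and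
`CostructuredArrow.pre` along the fully faithful inclusion `C₀ ⥤ C` are fully faithful, so only
essential surjectivity needs the hypothesis on `D₀`: for an object `(c, α : f c ⟶ d₀)` of
`C ×_D D_{/d₀}`, the arrow `α` forces `f c ∈ D₀`, i.e. `c ∈ C₀`, and then `(c, α)` itself lies in
`C₀ ×_{D₀} (D₀)_{/d₀}`.
-/

open CategoryTheory

namespace CategoryTheory.CostructuredArrow

variable {C D : Type*} [Category C] [Category D]

/-- The comparison functor `C₀ ×_{D₀} (D₀)_{/d₀} ⥤ C ×_D D_{/d₀}`, where `D₀` is cut out by `Q`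
and `C₀ = f⁻¹(D₀)`. -/
abbrev preimageComparison (f : C ⥤ D) (Q : D → Prop) (d₀ : ObjectProperty.FullSubcategory Q) :
    CostructuredArrow
        (ObjectProperty.lift Q (ObjectProperty.ι (fun c => Q (f.obj c)) ⋙ f) (fun c => c.2))
        d₀ ⥤ CostructuredArrow f d₀.obj :=
  post (ObjectProperty.lift Q (ObjectProperty.ι (fun c => Q (f.obj c)) ⋙ f) (fun c => c.2))
      (ObjectProperty.ι Q) d₀ ⋙
    pre (ObjectProperty.ι (fun c => Q (f.obj c))) f ((ObjectProperty.ι Q).obj d₀)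

variable {f : C ⥤ D} {Q : D → Prop}

lemma preimageComparison_essSurj (d₀ : ObjectProperty.FullSubcategory Q)
    (hQ : ∀ d, (d ⟶ d₀.obj) → Q d) : (preimageComparison f Q d₀).EssSurj where
  mem_essImage Y :=
    ⟨⟨⟨Y.left, hQ _ Y.hom⟩, ⟨⟨⟩⟩, ObjectProperty.homMk Y.hom⟩,
      ⟨isoMk (Iso.refl Y.left) (by show f.map (𝟙 Y.left) ≫ Y.hom = Y.hom; simp)⟩⟩

lemma preimageComparison_isEquivalence (d₀ : ObjectProperty.FullSubcategory Q)
    (hQ : ∀ d, (d ⟶ d₀.obj) → Q d) : (preimageComparison f Q d₀).IsEquivalence where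
  essSurj := preimageComparison_essSurj d₀ hQ

end CategoryTheory.CostructuredArrow

/-- Let `D₀ ⊆ D` be a full subcategory (cut out by `Q : D → Prop`),
`f : C ⥤ D` a functor, and let `C₀ ⊆ C` be the full subcategory `f⁻¹(D₀)` (so that the
square of inclusions and induced functor `g : C₀ ⥤ D₀` is a pullback of fully faithful
inclusions).  Assume that whenever there is a morphism `d ⟶ d₀` in `D` with `d₀ ∈ D₀`,
then `d ∈ D₀`.  Then for each `d₀ ∈ D₀` the canonical comparison functor
`C₀ ×_{D₀} (D₀)_{/d₀} ⥤ C ×_D D_{/d₀}` between comma categories is an equivalence. -/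
theorem stmt7 {C D : Type u} [Category.{u} C] [Category.{u} D]
    (f : C ⥤ D) (Q : D → Prop)
    (hQ : ∀ (d d₀ : D), Q d₀ → (d ⟶ d₀) → Q d)
    (d₀ : ObjectProperty.FullSubcategory Q) :
    (CostructuredArrow.post
        (ObjectProperty.lift Q (ObjectProperty.ι (fun c => Q (f.obj c)) ⋙ f)
          (fun c => c.2))
        (ObjectProperty.ι Q) d₀ ⋙
      CostructuredArrow.pre (ObjectProperty.ι (fun c => Q (f.obj c))) f
        ((ObjectProperty.ι Q).obj d₀)).IsEquivalence :=
  CostructuredArrow.preimageComparison_isEquivalence d₀ fun d => hQ d d₀.obj d₀.property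
end

section
/- Let (X, P) be a conically stratified space and S ⊆ P any subset. Then the stratified space (X_S, S) (the preimage of S with induced stratification) is again conically stratified. -/
/-- The Alexandroff topology on a poset `P`: the open sets are exactly the
upward closed subsets of `P`. -/
def alexandroff (P : Type*) [Preorder P] : TopologicalSpace P where
  IsOpen S := IsUpperSet S
  isOpen_univ := isUpperSet_univ
  isOpen_inter _ _ hs ht := hs.inter ht
  isOpen_sUnion _ h := isUpperSet_sUnion h

/-- The open cone `C(Y) = {*} ⊔ (Y × ℝ_{>0})` on a topological space `Y`;
the cone point is `none`. -/
def Cone' (Y : Type) : Type := Option (Y × {t : ℝ // 0 < t})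

/-- The cone topology on `C(Y)`: a subset `U` is open iff its trace on
`Y × ℝ_{>0}` is open and, if the cone point belongs to `U`, then
`{*} ⊔ (Y × (0, ε)) ⊆ U` for some `ε > 0`. -/
def coneTopology (Y : Type) [TopologicalSpace Y] : TopologicalSpace (Cone' Y) where
  IsOpen U := IsOpen {p : Y × {t : ℝ // 0 < t} | some p ∈ U} ∧
    (none ∈ U → ∃ ε > (0 : ℝ), ∀ (y : Y) (t : {t : ℝ // 0 < t}), t.1 < ε → some (y, t) ∈ U)
  isOpen_univ := ⟨isOpen_univ, fun _ => ⟨1, one_pos, fun _ _ _ => trivial⟩⟩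
  isOpen_inter := by
    rintro U V ⟨hU1, hU2⟩ ⟨hV1, hV2⟩
    refine ⟨hU1.inter hV1, ?_⟩
    rintro ⟨hnU, hnV⟩
    obtain ⟨ε₁, hε₁, h₁⟩ := hU2 hnU
    obtain ⟨ε₂, hε₂, h₂⟩ := hV2 hnV
    exact ⟨min ε₁ ε₂, lt_min hε₁ hε₂, fun y t ht =>
      ⟨h₁ y t (lt_of_lt_of_le ht (min_le_left _ _)),
       h₂ y t (lt_of_lt_of_le ht (min_le_right _ _))⟩⟩
  isOpen_sUnion := by
    intro S hS
    constructor
    · have h : {p : Y × {t : ℝ // 0 < t} | some p ∈ ⋃₀ S} =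
        ⋃ U ∈ S, {p | some p ∈ U} := by
        ext p
        simp only [Set.mem_sUnion, Set.mem_iUnion, Set.mem_setOf_eq, exists_prop]
        tauto
      rw [h]
      exact isOpen_biUnion fun U hU => (hS U hU).1
    · rintro ⟨U, hUS, hnU⟩
      obtain ⟨ε, hε, h⟩ := (hS U hUS).2 hnU
      exact ⟨ε, hε, fun y t ht => ⟨U, hUS, h y t ht⟩⟩
  

open Topology

/-- `(X, s : X → P)` is conically stratified: every point `x` lying over `a = s x` admits
a conical chart, i.e. there are a topological space `Z`, a stratified space
`(Y, g : Y → P_{> a})` and a map `φ : Z × C(Y) → X` of stratified spaces (over `P_{≥ a}`)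
inducing a homeomorphism of `Z × C(Y)` onto an open neighbourhood of `x` in `X`. -/
def IsConicallyStratified {X : Type} [TopologicalSpace X] {P : Type} [PartialOrder P]
    (s : X → P) : Prop :=
  ∀ x : X, ∃ (Z : Type) (tZ : TopologicalSpace Z) (Y : Type) (tY : TopologicalSpace Y)
    (g : Y → {b : P // s x < b}) (φ : Z × Cone' Y → X),
      (@Continuous Y _ tY (alexandroff _) g) ∧
      (@IsOpenEmbedding (Z × Cone' Y) X
        (@instTopologicalSpaceProd Z (Cone' Y) tZ (@coneTopology Y tY)) _ φ) ∧
      x ∈ Set.range φ ∧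
      (∀ (z : Z) (c : Cone' Y),
        s (φ (z, c)) = Option.elim c (s x) (fun p => (g p.1).1))

/-!
Take a conical chart `φ : Z × C(Y) → X` at a point `x` over `a ∈ S`. Since the cone point lies
over `a` and `(y, t)` over the stratum of `y`, the part of the chart lying over `S` is exactly
`Z × C(Y_S)` with `Y_S ⊆ Y` the part of the link over `S`. The cone on the subspace `Y_S` embeds
into `C(Y)`, so `φ` restricts to a conical chart of `X_S` at `x`, with link `Y_S`.
-/

open Set

attribute [local instance] coneTopology

lemma isInducing_alexandroff {Q R : Type*} [Preorder Q] [Preorder R] (e : Q ↪o R) :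
    @IsInducing Q R (alexandroff Q) (alexandroff R) e := by
  let := alexandroff Q
  let := alexandroff R
  refine (isInducing_iff _).2 (le_antisymm ?_ fun U (hU : IsUpperSet U) => ?_)
  · exact continuous_iff_le_induced.1
      (continuous_def.2 fun V (hV : IsUpperSet V) => hV.preimage e.monotone)
  · refine isOpen_induced_iff.2 ⟨upperClosure (e '' U), (upperClosure _).upper, ?_⟩
    ext q
    refine ⟨?_, fun hq => subset_upperClosure (mem_image_of_mem e hq)⟩
    rintro ⟨_, ⟨u, hu, rfl⟩, hle⟩
    exact hU (e.le_iff_le.1 hle) hu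

lemma continuous_alexandroff_iff_comp {Y Q R : Type*} [TopologicalSpace Y] [Preorder Q]
    [Preorder R] (e : Q ↪o R) (g : Y → Q) :
    @Continuous Y Q _ (alexandroff Q) g ↔ @Continuous Y R _ (alexandroff R) (e ∘ g) := by
  let := alexandroff Q
  let := alexandroff R
  exact (isInducing_alexandroff e).continuous_iff

def Set.gtEmbedding {P : Type*} [PartialOrder P] (S : Set P) (a : S) :
    {b : S // a < b} ↪o {b : P // a.1 < b} :=
  OrderEmbedding.ofMapLEIff (fun b : {b : S // a < b} => (⟨b.1.1, b.2⟩ : {b : P // a.1 < b}))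
    fun _ _ => Iff.rfl

namespace Cone'

def map {Y Y' : Type} (f : Y → Y') : Cone' Y → Cone' Y' :=
  Option.map (Prod.map f id)

lemma map_injective {Y Y' : Type} {f : Y → Y'} (hf : Function.Injective f) :
    Function.Injective (map f) :=
  Option.map_injective (hf.prodMap Function.injective_id)

/-- The key computation: in a cone chart `Z × C(Y)` whose cone point lies over `a ∈ S`, the
points lying over `S` form `Z × C(Y_S)`. -/
lemma preimage_elim_eq_range_map {Z Y P : Type} (σ : Y → P) {a : P} {S : Set P}
    (ha : a ∈ S) :
    (fun w : Z × Cone' Y => Option.elim w.2 a fun q => σ q.1) ⁻¹' S =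
      range (Prod.map id (map (Subtype.val : {y // σ y ∈ S} → Y))) := by
  ext ⟨z, _ | ⟨y, t⟩⟩
  · exact ⟨fun _ => ⟨(z, none), rfl⟩, fun _ => ha⟩
  · refine ⟨fun hy => ⟨(z, some (⟨y, hy⟩, t)), rfl⟩, ?_⟩
    rintro ⟨⟨z', _ | ⟨y', t'⟩⟩, h⟩
    · cases congrArg Prod.snd h
    · cases congrArg Prod.snd h
      exact y'.2

variable {Y Y' : Type} [TopologicalSpace Y] [TopologicalSpace Y'] {f : Y → Y'}

lemma continuous_map (hf : Continuous f) : Continuous (map f) := by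
  refine ⟨fun V ⟨hV, hVpt⟩ => ⟨hV.preimage (hf.prodMap continuous_id), fun hpt => ?_⟩⟩
  obtain ⟨ε, hε, hεV⟩ := hVpt hpt
  exact ⟨ε, hε, fun y t ht => hεV (f y) t ht⟩

/-- An open set `U` of `C(Y)` is the preimage of the open set of `C(Y')` made of an open set
of `Y' × ℝ_{>0}` inducing the trace of `U`, together with a conical neighbourhood of the cone
point if `U` contains it. -/
lemma isInducing_map (hf : IsInducing f) : IsInducing (map f) := by
  refine (isInducing_iff _).2
    (le_antisymm (continuous_iff_le_induced.1 (continuous_map hf.continuous)) fun U hU => ?_)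
  obtain ⟨hUtr, hUpt⟩ := hU
  obtain ⟨V, hV, hVU⟩ := ((hf.prodMap IsInducing.id).isOpen_iff).1 hUtr
  have hVU' (y : Y) (t : {t : ℝ // 0 < t}) : (f y, t) ∈ V ↔ some (y, t) ∈ U :=
    Set.ext_iff.1 hVU (y, t)
  rw [isOpen_induced_iff]
  by_cases hpt : none ∈ U
  · obtain ⟨ε, hε, hεU⟩ := hUpt hpt
    refine ⟨{c | Option.elim c True fun q => q ∈ V ∨ q.2.1 < ε},
      ⟨hV.union (isOpen_lt (continuous_subtype_val.comp continuous_snd) continuous_const),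
        fun _ => ⟨ε, hε, fun _ _ => Or.inr⟩⟩, ?_⟩
    ext (_ | ⟨y, t⟩)
    · exact iff_of_true trivial hpt
    · exact ⟨fun h => Or.elim h (hVU' y t).1 (hεU y t), fun h => Or.inl ((hVU' y t).2 h)⟩
  · refine ⟨{c | Option.elim c False (· ∈ V)}, ⟨hV, False.elim⟩, ?_⟩
    ext (_ | ⟨y, t⟩)
    · exact iff_of_false id hpt
    · exact hVU' y t

lemma isEmbedding_map (hf : IsEmbedding f) : IsEmbedding (map f) :=
  ⟨isInducing_map hf.isInducing, map_injective hf.injective⟩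

end Cone'

section Restriction

variable {A B X : Type*} {φ : A → X} {ψ : B → A} {T : Set X}

lemma Set.range_codRestrict_comp (hψT : range ψ = φ ⁻¹' T) :
    range (T.codRestrict (φ ∘ ψ) fun b => hψT.subset (mem_range_self b)) =
      Subtype.val ⁻¹' range φ := by
  rw [range_codRestrict, range_comp, hψT, image_preimage_eq_inter_range, preimage_inter,
    Subtype.coe_preimage_self, univ_inter]

variable [TopologicalSpace A] [TopologicalSpace B] [TopologicalSpace X]

lemma Topology.IsOpenEmbedding.codRestrict_comp (hφ : IsOpenEmbedding φ) (hψ : IsEmbedding ψ)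
    (hψT : range ψ = φ ⁻¹' T) :
    IsOpenEmbedding (T.codRestrict (φ ∘ ψ) fun b => hψT.subset (mem_range_self b)) :=
  ⟨(hφ.isEmbedding.comp hψ).codRestrict _ _,
    (range_codRestrict_comp hψT).symm ▸ hφ.isOpen_range.preimage continuous_subtype_val⟩

end Restriction

theorem stmt12_general {X : Type} [TopologicalSpace X] {P : Type} [PartialOrder P]
    (s : X → P) (hX : IsConicallyStratified s) (S : Set P) :
    IsConicallyStratified (fun x : {x : X // s x ∈ S} => (⟨s x.1, x.2⟩ : S)) := by
  intro x
  obtain ⟨Z, tZ, Y, tY, g, φ, hg, hφ, hx, hsφ⟩ := hX x.1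
  let ψ := Prod.map (id : Z → Z) (Cone'.map (Subtype.val : {y // (g y).1 ∈ S} → Y))
  have hψ : range ψ = φ ⁻¹' (s ⁻¹' S) := by
    rw [← Cone'.preimage_elim_eq_range_map (fun y => (g y).1) x.2, ← preimage_comp]
    exact congrArg (· ⁻¹' S) (funext fun w => (hsφ w.1 w.2).symm)
  let g' (y : {y // (g y).1 ∈ S}) : {b : S // ⟨s x.1, x.2⟩ < b} := ⟨⟨(g y.1).1, y.2⟩, (g y.1).2⟩
  refine ⟨Z, tZ, {y // (g y).1 ∈ S}, inferInstance, g', _, ?_,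
    hφ.codRestrict_comp (IsEmbedding.id.prodMap (Cone'.isEmbedding_map .subtypeVal)) hψ, ?_,
    fun z c => ?_⟩
  · -- the Alexandroff topology is not an instance, so it is supplied here
    let := alexandroff {b : P // s x.1 < b}
    exact (continuous_alexandroff_iff_comp (S.gtEmbedding ⟨s x.1, x.2⟩) g').2
      (hg.comp continuous_subtype_val)
  · rw [range_codRestrict_comp hψ]
    exact hx
  · rcases c with _ | ⟨y, t⟩ <;> exact Subtype.ext (hsφ z _)

/-- Let `(X, P)` be a conically stratified space and `S ⊆ P` any subset.
Then the stratified space `(X_S, S)` (the preimage of `S` with the induced stratification)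
is again conically stratified. -/
theorem stmt12 {X : Type} [TopologicalSpace X] {P : Type} [PartialOrder P]
    (s : X → P) (hs : @Continuous X P _ (alexandroff P) s)
    (hX : IsConicallyStratified s) (S : Set P) :
    IsConicallyStratified (fun x : {x : X // s x ∈ S} => (⟨s x.1, x.2⟩ : S)) :=
  stmt12_general s hX S
end
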